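/- Let U ⊆ V = ℂ^{2N} be a complex subspace with zU ⊆ U and U ⊆ im(z). Then the subspace z^{-1}U ∩ U^⊥ of V is two-dimensional and the restriction of C to z^{-1}U ∩ U^⊥ is a unitary isomorphism onto ℂ², i.e. a bijective linear map preserving the Hermitian inner products. -/

import Mathlib

noncomputable section
namespace Spr

/-! ### Linear algebra setup -/

abbrev Vsp (N : ℕ) := EuclideanSpace ℂ (Fin (2*N))
abbrev C2 := EuclideanSpace ℂ (Fin 2)

/-- The basis vector `e_i` (1-based index). -/
def eVec (N i : ℕ) : Vsp N :=
  if h : 1 ≤ i ∧ i ≤ N then EuclideanSpace.single (⟨i-1, by omega⟩ : Fin (2*N)) 1 else 0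

/-- The basis vector `f_i` (1-based index). -/
def fVec (N i : ℕ) : Vsp N :=
  if h : 1 ≤ i ∧ i ≤ N then EuclideanSpace.single (⟨N+i-1, by omega⟩ : Fin (2*N)) 1 else 0

/-- The standard basis vector `e` of `ℂ²`. -/
def eStd : C2 := EuclideanSpace.single 0 1
/-- The standard basis vector `f` of `ℂ²`. -/
def fStd : C2 := EuclideanSpace.single 1 1

/-- The nilpotent endomorphism `z` with two equal Jordan blocks:
`z e_1 = 0 = z f_1`, `z e_{i+1} = e_i`, `z f_{i+1} = f_i`. -/
def zMap (N : ℕ) : Vsp N →ₗ[ℂ] Vsp N where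
  toFun v := WithLp.toLp 2 (fun j : Fin (2*N) =>
    if h : j.val + 1 < 2*N ∧ j.val + 1 ≠ N then v ⟨j.val+1, h.1⟩ else 0)
  map_add' v w := by
    ext j
    by_cases h : j.val + 1 < 2*N ∧ j.val + 1 ≠ N <;> simp [h, PiLp.add_apply]
  map_smul' c v := by
    ext j
    by_cases h : j.val + 1 < 2*N ∧ j.val + 1 ≠ N <;> simp [h, PiLp.smul_apply]

def cIdx (N : ℕ) (j : Fin 2) (i : Fin N) : Fin (2*N) :=
  ⟨if j.val = 0 then i.val else N + i.val, by have := i.isLt; split <;> omega⟩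

/-- The linear map `C : ℂ^{2N} → ℂ²`, `e_i ↦ e`, `f_i ↦ f`. -/
def Cmap (N : ℕ) : Vsp N →ₗ[ℂ] C2 where
  toFun v := WithLp.toLp 2 (fun j : Fin 2 => ∑ i : Fin N, v (cIdx N j i))
  map_add' v w := by
    ext j
    simp [PiLp.add_apply, Finset.sum_add_distrib]
  map_smul' c v := by
    ext j
    simp [PiLp.smul_apply, Finset.mul_sum]

/-- The subspace `E_{a,b} = span(e_1,…,e_a,f_1,…,f_b)`. -/
def Esub (N a b : ℕ) : Submodule ℂ (Vsp N) :=
  Submodule.span ℂ ((eVec N '' Set.Icc 1 a) ∪ (fVec N '' Set.Icc 1 b))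

/-- Gram coefficients of the symmetric bilinear form `β_D^{2m-k,k}`. -/
def cD (N m k : ℕ) (p q : Fin (2*N)) : ℂ :=
  if k = m then
    (if p.val < N ∧ N ≤ q.val then
      (if (p.val + 1) + (q.val - N + 1) = k + 1 then (-1:ℂ)^(q.val - N) else 0)
    else if N ≤ p.val ∧ q.val < N then
      (if (p.val - N + 1) + (q.val + 1) = k + 1 then (-1:ℂ)^(p.val - N) else 0)
    else 0)
  else
    (if p.val < N ∧ q.val < N then
      (if (p.val + 1) + (q.val + 1) = 2*m - k + 1 then (-1:ℂ)^(p.val) else 0)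
    else if N ≤ p.val ∧ N ≤ q.val then
      (if (p.val - N + 1) + (q.val - N + 1) = k + 1 then (-1:ℂ)^(p.val - N + 1) else 0)
    else 0)

/-- Gram coefficients of the symplectic bilinear form `β_C^{2m-k-1,k-1}`. -/
def cC (N m k : ℕ) (p q : Fin (2*N)) : ℂ :=
  if k = m then
    (if N ≤ p.val ∧ q.val < N then
      (if (p.val - N + 1) + (q.val + 1) = k then (-1:ℂ)^(p.val - N) else 0)
    else if p.val < N ∧ N ≤ q.val then
      (if (p.val + 1) + (q.val - N + 1) = k then -(-1:ℂ)^(q.val - N) else 0)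
    else 0)
  else
    (if p.val < N ∧ q.val < N then
      (if (p.val + 1) + (q.val + 1) = 2*m - k ∧ p.val < q.val then (-1:ℂ)^(p.val + 1)
       else if (p.val + 1) + (q.val + 1) = 2*m - k ∧ q.val < p.val then (-1:ℂ)^(p.val)
       else 0)
    else if N ≤ p.val ∧ N ≤ q.val then
      (if (p.val - N + 1) + (q.val - N + 1) = k ∧ p.val < q.val then (-1:ℂ)^(p.val - N)
       else if (p.val - N + 1) + (q.val - N + 1) = k ∧ q.val < p.val then (-1:ℂ)^(p.val - N + 1)
       else 0)
    else 0)

/-- The bilinear pairing associated to a matrix `c` of coefficients. -/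
def bFormFun (N : ℕ) (c : Fin (2*N) → Fin (2*N) → ℂ) (v w : Vsp N) : ℂ :=
  ∑ p : Fin (2*N), ∑ q : Fin (2*N), v p * (c p q * w q)

/-- The symmetric bilinear form `β_D^{2m-k,k}` (extended by zero to all of `ℂ^{2N}`). -/
def betaD (N m k : ℕ) : Vsp N → Vsp N → ℂ := bFormFun N (cD N m k)

/-- The symplectic bilinear form `β_C^{2m-k-1,k-1}` (extended by zero to all of `ℂ^{2N}`). -/
def betaC (N m k : ℕ) : Vsp N → Vsp N → ℂ := bFormFun N (cC N m k)

/-- A subspace is isotropic with respect to a bilinear form. -/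
def IsIsotropic {N : ℕ} (B : Vsp N → Vsp N → ℂ) (W : Submodule ℂ (Vsp N)) : Prop :=
  ∀ v ∈ W, ∀ w ∈ W, B v w = 0

lemma bFormFun_add_left {N : ℕ} (c : Fin (2*N) → Fin (2*N) → ℂ) (v v' w : Vsp N) :
    bFormFun N c (v + v') w = bFormFun N c v w + bFormFun N c v' w := by
  simp [bFormFun, PiLp.add_apply, add_mul, Finset.sum_add_distrib]

lemma bFormFun_smul_left {N : ℕ} (c : Fin (2*N) → Fin (2*N) → ℂ) (s : ℂ) (v w : Vsp N) :
    bFormFun N c (s • v) w = s * bFormFun N c v w := by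
  simp [bFormFun, PiLp.smul_apply, smul_eq_mul, mul_assoc, Finset.mul_sum]

lemma bFormFun_zero_left {N : ℕ} (c : Fin (2*N) → Fin (2*N) → ℂ) (w : Vsp N) :
    bFormFun N c 0 w = 0 := by
  simp [bFormFun]

/-- `{v ∈ E | ∀ w ∈ F, B(v,w) = 0}` for the bilinear form with coefficients `c`. -/
def perpB (N : ℕ) (c : Fin (2*N) → Fin (2*N) → ℂ) (E F : Submodule ℂ (Vsp N)) :
    Submodule ℂ (Vsp N) where
  carrier := {v | v ∈ E ∧ ∀ w ∈ F, bFormFun N c v w = 0}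
  add_mem' := by
    rintro x y ⟨hxE, hx⟩ ⟨hyE, hy⟩
    exact ⟨E.add_mem hxE hyE, fun w hw => by
      rw [bFormFun_add_left, hx w hw, hy w hw, add_zero]⟩
  zero_mem' := ⟨E.zero_mem, fun w hw => bFormFun_zero_left c w⟩
  smul_mem' := by
    rintro s x ⟨hxE, hx⟩
    exact ⟨E.smul_mem s hxE, fun w hw => by
      rw [bFormFun_smul_left, hx w hw, mul_zero]⟩

/-- `F^{⊥_D}`, the orthogonal of `F` inside `E_{2m-k,k}` with respect to `β_D`. -/
def perpD (N m k : ℕ) (F : Submodule ℂ (Vsp N)) : Submodule ℂ (Vsp N) :=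
  perpB N (cD N m k) (Esub N (2*m-k) k) F

/-- `F^{⊥_C}`, the orthogonal of `F` inside `E_{2m-k-1,k-1}` with respect to `β_C`. -/
def perpC (N m k : ℕ) (F : Submodule ℂ (Vsp N)) : Submodule ℂ (Vsp N) :=
  perpB N (cC N m k) (Esub N (2*m-k-1) (k-1)) F

/-- Membership in the Cautis–Kamnitzer variety `Y`: a flag `F_0 ⊆ F_1 ⊆ … ⊆ F_{len-1}` with
`F_0 = 0`, `dim F_i = i`, and `z F_i ⊆ F_{i-1}`. -/
def InY (N len : ℕ) (F : Fin len → Submodule ℂ (Vsp N)) : Prop :=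
  (∀ i : Fin len, i.val = 0 → F i = ⊥) ∧
  ∀ i j : Fin len, j.val = i.val + 1 →
    Module.finrank ℂ ↥(F j) = j.val ∧ F i ≤ F j ∧
      Submodule.map (zMap N) (F j) ≤ F i

/-- Membership in the embedded type `D` Springer fiber `Fl^{2m-k,k}_D ⊆ Y_m`. -/
def InFlD (N m k : ℕ) (F : Fin (m+1) → Submodule ℂ (Vsp N)) : Prop :=
  InY N (m+1) F ∧ F (Fin.last m) ≤ Esub N (2*m-k) k ∧
    IsIsotropic (betaD N m k) (F (Fin.last m))

/-- Membership in the embedded type `C` Springer fiber `Fl^{2m-k-1,k-1}_C ⊆ Y_{m-1}`;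
here `G : Fin m → _` is the flag `(G_0,…,G_{m-1})`. -/
def InFlC (N m k : ℕ) (G : Fin m → Submodule ℂ (Vsp N)) : Prop :=
  InY N m G ∧ ∀ i : Fin m, i.val = m - 1 →
    G i ≤ Esub N (2*m-k-1) (k-1) ∧ IsIsotropic (betaC N m k) (G i)

/-! ### Cup diagrams -/

/-- A (dotted) cup diagram on the vertices `{1,…,m}`. -/
structure CupDiagram (m : ℕ) where
  cups : Finset (ℕ × ℕ)
  dottedCups : Finset (ℕ × ℕ)
  dottedRays : Finset ℕ
  cups_valid : ∀ p ∈ cups, 1 ≤ p.1 ∧ p.1 < p.2 ∧ p.2 ≤ m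
  cups_disjoint : ∀ p ∈ cups, ∀ q ∈ cups, p ≠ q →
    p.1 ≠ q.1 ∧ p.1 ≠ q.2 ∧ p.2 ≠ q.1 ∧ p.2 ≠ q.2
  noncrossing : ∀ p ∈ cups, ∀ l, p.1 < l → l < p.2 →
    ∃ q ∈ cups, (l = q.1 ∨ l = q.2) ∧ p.1 < q.1 ∧ q.2 < p.2
  dottedCups_sub : dottedCups ⊆ cups
  dottedRays_valid : ∀ r ∈ dottedRays, 1 ≤ r ∧ r ≤ m ∧ ∀ p ∈ cups, r ≠ p.1 ∧ r ≠ p.2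
  dottedCups_cond : ∀ p ∈ dottedCups,
    (∀ q ∈ cups, ¬(q.1 < p.1 ∧ p.2 < q.2)) ∧
    (∀ r, p.2 < r → r ≤ m → ∃ q ∈ cups, r = q.1 ∨ r = q.2)
  dottedRays_cond : ∀ r ∈ dottedRays, ∀ r', r < r' → r' ≤ m →
    ∃ q ∈ cups, r' = q.1 ∨ r' = q.2

/-- The vertex `v` carries a ray of the cup diagram `a`. -/
def CupDiagram.HasRay {m : ℕ} (a : CupDiagram m) (v : ℕ) : Prop :=
  1 ≤ v ∧ v ≤ m ∧ ∀ p ∈ a.cups, v ≠ p.1 ∧ v ≠ p.2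

/-- The total number of dots of a cup diagram. -/
def CupDiagram.dots {m : ℕ} (a : CupDiagram m) : ℕ :=
  a.dottedCups.card + a.dottedRays.card

/-! ### The sets `T_a ⊆ (ℙ¹)^m` -/

/-- The subset `T_a ⊆ (ℙ¹)^m` attached to a cup diagram `a ∈ B^{2m-k,k}`
(tuples are `0`-indexed: the coordinate `l i` corresponds to the vertex `i+1`). -/
def Ta (m k : ℕ) (a : CupDiagram m) : Set (Fin m → Submodule ℂ C2) :=
  {l | (∀ i : Fin m, Module.finrank ℂ ↥(l i) = 1) ∧
       (∀ i j : Fin m, (i.val+1, j.val+1) ∈ a.cups → (i.val+1, j.val+1) ∉ a.dottedCups →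
          l j = (l i)ᗮ) ∧
       (∀ i j : Fin m, (i.val+1, j.val+1) ∈ a.dottedCups → l i = l j) ∧
       (if k = m then
          ∀ i : Fin m, a.HasRay (i.val+1) →
            (i.val+1 ∉ a.dottedRays → l i = Submodule.span ℂ {fStd}) ∧
            (i.val+1 ∈ a.dottedRays → l i = Submodule.span ℂ {eStd})
        else
          ∀ i : Fin m, a.HasRay (i.val+1) →
            ((∃ r, a.HasRay r ∧ i.val+1 < r) → l i = Submodule.span ℂ {eStd}) ∧
            ((∀ r, a.HasRay r → r ≤ i.val+1) →
              l i = Submodule.span ℂ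
                {(if (m-k) % 2 = 0 then (1:ℂ) else Complex.I) • eStd +
                 (if i.val+1 ∈ a.dottedRays then (1:ℂ) else (-1:ℂ)) • fStd}))}

/-- The compatibility `C(F_{i} ∩ F_{i-1}^⊥) = l_i` for all `1 ≤ i ≤ m`. -/
def Compat (N m : ℕ) (F : Fin (m+1) → Submodule ℂ (Vsp N))
    (l : Fin m → Submodule ℂ C2) : Prop :=
  ∀ i : Fin m, Submodule.map (Cmap N) (F i.succ ⊓ (F i.castSucc)ᗮ) = l i

/-! ### Spheres and the topological Springer fiber -/

abbrev E3 := EuclideanSpace ℝ (Fin 3)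
abbrev Sph : Type := ↥(Metric.sphere (0 : E3) 1)

/-- The point `p = (0,0,1)`. -/
def pPt : E3 := EuclideanSpace.single 2 1
/-- The point `q = (1,0,0)`. -/
def qPt : E3 := EuclideanSpace.single 0 1

/-- The submanifold `S_a ⊆ (S²)^m` attached to a cup diagram `a`
(tuples are `0`-indexed: the coordinate `x i` corresponds to the vertex `i+1`). -/
def Sa (m : ℕ) (a : CupDiagram m) : Set (Fin m → Sph) :=
  {x | (∀ i j : Fin m, (i.val+1, j.val+1) ∈ a.cups →
          ((i.val+1, j.val+1) ∉ a.dottedCups → (x i : E3) = -(x j : E3)) ∧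
          ((i.val+1, j.val+1) ∈ a.dottedCups → (x i : E3) = (x j : E3))) ∧
       (∀ i : Fin m, a.HasRay (i.val+1) →
          (i.val+1 ∈ a.dottedRays → (x i : E3) = pPt) ∧
          (i.val+1 ∉ a.dottedRays →
            ((∀ r, a.HasRay r → r ≤ i.val+1) → (x i : E3) = -pPt) ∧
            ((∃ r, a.HasRay r ∧ i.val+1 < r) → (x i : E3) = qPt)))}

/-! ### Circle diagrams -/

/-- The edge relation of the circle diagram `\bar a b`. -/
def EdgeRel (m : ℕ) (a b : CupDiagram m) (i j : ℕ) : Prop :=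
  (i, j) ∈ a.cups ∨ (j, i) ∈ a.cups ∨ (i, j) ∈ b.cups ∨ (j, i) ∈ b.cups

/-- Two vertices lie in the same connected component of the circle diagram. -/
def Reach (m : ℕ) (a b : CupDiagram m) : ℕ → ℕ → Prop :=
  Relation.ReflTransGen (EdgeRel m a b)

/-- The number of dots on the connected component of the vertex `v` in the
circle diagram `\bar a b`. -/
def compDots (m : ℕ) (a b : CupDiagram m) (v : ℕ) : ℕ :=
  {p : ℕ × ℕ | p ∈ a.dottedCups ∧ Reach m a b v p.1 ∧ Reach m a b v p.2}.ncard +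
  {p : ℕ × ℕ | p ∈ b.dottedCups ∧ Reach m a b v p.1 ∧ Reach m a b v p.2}.ncard +
  {r : ℕ | r ∈ a.dottedRays ∧ Reach m a b v r}.ncard +
  {r : ℕ | r ∈ b.dottedRays ∧ Reach m a b v r}.ncard

/-- The connected component of `v` in the circle diagram is closed, i.e. none of
its vertices carries a ray of `a` or of `b`. -/
def IsClosedCompAt (m : ℕ) (a b : CupDiagram m) (v : ℕ) : Prop :=
  ∀ w, Reach m a b v w → ¬ a.HasRay w ∧ ¬ b.HasRay w

/-- The number of closed connected components of the circle diagram `\bar a b`. -/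
def numClosed (m : ℕ) (a b : CupDiagram m) : ℕ :=
  {s : Set ℕ | ∃ v, 1 ≤ v ∧ v ≤ m ∧ IsClosedCompAt m a b v ∧
      s = {w | Reach m a b v w}}.ncard

/-! ### The diffeomorphism `γ_{n-k,k}` -/

/-- Stereographic projection `S² \ {p} → ℂ`. -/
def sigmaProj (v : E3) : ℂ :=
  Complex.ofReal (v 0 / (1 - v 2)) + Complex.I * Complex.ofReal (v 1 / (1 - v 2))

open scoped Classical in
/-- The map `γ : S² → ℙ¹` (extended to the ambient space `ℝ³`). -/
def gammaAmb (v : E3) : Submodule ℂ C2 :=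
  if v = pPt then Submodule.span ℂ {eStd}
  else Submodule.span ℂ {sigmaProj v • eStd + fStd}

/-- The coordinate swap `s(x,y,z) = (x,z,y)`. -/
def sSwap (v : E3) : E3 := WithLp.toLp 2 (fun j : Fin 3 => v (if j.val = 1 then (2 : Fin 3) else if j.val = 2 then 1 else 0))
/-- The coordinate swap `t(x,y,z) = (z,y,x)`. -/
def tSwap (v : E3) : E3 := WithLp.toLp 2 (fun j : Fin 3 => v (if j.val = 0 then (2 : Fin 3) else if j.val = 2 then 0 else 1))

/-- The diffeomorphism `γ_{n-k,k} : (S²)^m → (ℙ¹)^m`. -/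
def gammaNK (m k : ℕ) (x : Fin m → Sph) : Fin m → Submodule ℂ C2 := fun i =>
  if k = m then gammaAmb (x i)
  else if (m - k) % 2 = 1 then gammaAmb (tSwap (x i))
  else gammaAmb (sSwap (x i))

/-! ### Jordan types and special simultaneous Jordan systems -/

/-- The nilpotent endomorphism induced by `z` on the subquotient `W/F` has Jordan type
`(a,b)`, encoded via the dimensions of the kernels of its powers:
`dim ker((z̄)^j) = min(j,a) + min(j,b)` for all `j`. -/
def HasJordanTypeOn (N : ℕ) (W F : Submodule ℂ (Vsp N)) (a b : ℕ) : Prop :=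
  ∀ j : ℕ, Module.finrank ℂ ↥(W ⊓ Submodule.comap (zMap N ^ j) F)
    = min j a + min j b + Module.finrank ℂ ↥F

/-- A special simultaneous Jordan system at level `i` for the subspace `Fi = F_i`
(Definition of Ehrig–Stroppel–Wilbert, Definition 4.4 of the paper). -/
def SpecialSJS (N m k : ℕ) (Fi : Submodule ℂ (Vsp N)) (i : ℕ) (ev fv : ℕ → Vsp N) : Prop :=
  (∀ j, 1 ≤ j → j + 1 ≤ m - i → zMap N (ev (j+1)) = ev j ∧ zMap N (fv (j+1)) = fv j) ∧
  (zMap N (ev 1) ∈ Fi ∧ zMap N (fv 1) ∈ Fi) ∧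
  (∀ j, 1 ≤ j → j ≤ m - i → ev j ∈ perpD N m k Fi ∧ fv j ∈ perpD N m k Fi) ∧
  (∀ j, 1 ≤ j → j ≤ m - i - 1 → ev j ∈ perpC N m k Fi ∧ fv j ∈ perpC N m k Fi) ∧
  LinearIndependent ℂ (fun s : Fin (m-i) ⊕ Fin (m-i) =>
    (Submodule.Quotient.mk (Sum.elim (fun t => ev (t.val+1)) (fun t => fv (t.val+1)) s) :
      Vsp N ⧸ Fi)) ∧
  (perpD N m k Fi
     = Fi ⊔ Submodule.span ℂ ((ev '' Set.Icc 1 (m-i)) ∪ (fv '' Set.Icc 1 (m-i)))) ∧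
  (perpC N m k Fi
     = Fi ⊔ Submodule.span ℂ ((ev '' Set.Icc 1 (m-i-1)) ∪ (fv '' Set.Icc 1 (m-i-1)))) ∧
  (∀ j j', 1 ≤ j → j ≤ m-i → 1 ≤ j' → j' ≤ m-i →
      betaD N m k (fv j) (ev j') = (if j + j' = m - i + 1 then (-1:ℂ)^(j-1) else 0) ∧
      betaD N m k (ev j) (ev j') = 0 ∧ betaD N m k (fv j) (fv j') = 0) ∧
  (∀ j j', 1 ≤ j → j ≤ m-i-1 → 1 ≤ j' → j' ≤ m-i-1 →
      betaC N m k (fv j) (ev j') = (if j + j' = m - i then (-1:ℂ)^(j-1) else 0) ∧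
      betaC N m k (ev j') (fv j) = -(if j + j' = m - i then (-1:ℂ)^(j-1) else 0) ∧
      betaC N m k (ev j) (ev j') = 0 ∧ betaC N m k (fv j) (fv j') = 0) ∧
  (∀ j j', 1 ≤ j → j ≤ m-i → 1 ≤ j' → j' ≤ m-i →
      (inner ℂ (ev j) (ev j') : ℂ) = (if j = j' then 1 else 0) ∧
      (inner ℂ (fv j) (fv j') : ℂ) = (if j = j' then 1 else 0) ∧
      (inner ℂ (ev j) (fv j') : ℂ) = 0) ∧
  (∀ j, 1 ≤ j → j ≤ m-i → ev j ∈ Fiᗮ ∧ fv j ∈ Fiᗮ) ∧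
  (∀ j, 2 ≤ j → j ≤ m-i → Cmap N (ev j) = Cmap N (zMap N (ev j)) ∧
      Cmap N (fv j) = Cmap N (zMap N (fv j)))

end Spr

/-!
Let `T` be the operator `(T v)_q = ∑ v_p` over the indices `p > q` in the block of `q`, i.e.
`T = z + z² + ⋯`. As `C^* C` is the all-ones matrix on each block,
`⟪Cx, Cy⟫ = ⟪x, y⟫ + ⟪Tx, y⟫ + ⟪x, Ty⟫`. Moreover `1 + T = (1 - z)⁻¹`, and `1 - z` maps a
`z`-stable `U` injectively, hence onto, itself; so `Tx = (1 + T)(zx) ∈ U` whenever `zx ∈ U`,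
and both correction terms vanish on `z⁻¹U ∩ U^⊥`. So `C` is isometric there, which gives
`dim ≤ 2`, while `U ⊆ im z` gives `dim z⁻¹U = dim U + dim ker z ≥ dim U + 2`.
-/

section General

variable {K V : Type*} [Field K] [AddCommGroup V] [Module K V] [FiniteDimensional K V]

theorem Module.End.map_le_of_mul_eq_one {A B : Module.End K V} (hAB : A * B = 1)
    {U : Submodule K V} (hA : U.map A ≤ U) : U.map B ≤ U := by
  have hBA : B * A = 1 := mul_eq_one_comm.mp hAB
  have hAinj : Function.Injective A := Function.LeftInverse.injective
    (g := B) fun x => by simpa using LinearMap.congr_fun hBA x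
  have hAU : U.map A = U := Submodule.eq_of_le_of_finrank_eq hA
    (LinearEquiv.finrank_eq (Submodule.equivMapOfInjective A hAinj U)).symm
  have hBAU : (U.map A).map B = U := by
    rw [← Submodule.map_comp, ← Module.End.mul_eq_comp, hBA, Module.End.one_eq_id,
      Submodule.map_id]
  rw [hAU] at hBAU
  exact hBAU.le

theorem LinearMap.finrank_comap_eq_finrank_add_finrank_ker {W : Type*} [AddCommGroup W]
    [Module K W] (f : V →ₗ[K] W) {U : Submodule K W} (hU : U ≤ LinearMap.range f) :
    Module.finrank K (U.comap f) = Module.finrank K U + Module.finrank K (LinearMap.ker f) := by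
  have h := LinearMap.finrank_range_add_finrank_ker (f.domRestrict (U.comap f))
  rw [LinearMap.range_domRestrict, Submodule.map_comap_eq, inf_eq_right.2 hU,
    LinearMap.ker_domRestrict, (Submodule.comapSubtypeEquivOfLe
      (LinearMap.ker_le_comap (f := f))).finrank_eq] at h
  omega

theorem sum_conj_fiberSum_mul_fiberSum {R ι κ : Type*} [CommSemiring R] [StarRing R] [Fintype ι]
    [Fintype κ] [DecidableEq κ] (b : ι → κ) (x y : ι → R) :
    ∑ j, starRingEnd R (∑ p, if b p = j then x p else 0) * (∑ q, if b q = j then y q else 0) =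
      ∑ p, ∑ q, if b p = b q then starRingEnd R (x p) * y q else 0 := by
  simp only [map_sum, Finset.sum_mul_sum]
  rw [Finset.sum_comm]
  refine Finset.sum_congr rfl fun p _ => ?_
  rw [Finset.sum_comm]
  refine Finset.sum_congr rfl fun q _ => ?_
  split_ifs with h <;> simp [h, mul_ite]

end General

namespace Spr

variable {N : ℕ}

def block (N : ℕ) (p : Fin (2*N)) : Fin 2 := if p.val < N then 0 else 1

theorem block_eq_block_iff {p q : Fin (2*N)} :
    block N p = block N q ↔ (p.val < N ↔ q.val < N) := by
  unfold block; split_ifs <;> simp <;> omega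

theorem sum_fin_two_mul {M : Type*} [AddCommMonoid M] (g : Fin (2*N) → M) :
    ∑ p, g p = ∑ i : Fin N, g ⟨i, by omega⟩ + ∑ i : Fin N, g ⟨N + i, by omega⟩ := by
  rw [← Equiv.sum_comp (finCongr (two_mul N).symm) g, Fin.sum_univ_add]
  rfl

theorem Cmap_apply (v : Vsp N) (j : Fin 2) :
    Cmap N v j = ∑ p, if block N p = j then v p else 0 := by
  rw [sum_fin_two_mul]
  fin_cases j <;> simp [Cmap, cIdx, block]

def blockTail (N : ℕ) : Vsp N →ₗ[ℂ] Vsp N where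
  toFun v := WithLp.toLp 2 fun q => ∑ p, if block N p = block N q ∧ q < p then v p else 0
  map_add' v w := by ext q; simp [ite_add_zero, Finset.sum_add_distrib]
  map_smul' c v := by ext q; simp [Finset.mul_sum]

theorem blockTail_apply (v : Vsp N) (q : Fin (2*N)) :
    blockTail N v q = ∑ p, if block N p = block N q ∧ q < p then v p else 0 := rfl

theorem zMap_apply (v : Vsp N) (q : Fin (2*N)) :
    zMap N v q = if h : q.val + 1 < 2*N ∧ q.val + 1 ≠ N then v ⟨q.val + 1, h.1⟩ else 0 :=
  rfl

theorem blockTail_eq_zMap_add (v : Vsp N) : blockTail N v = zMap N (v + blockTail N v) := by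
  ext q
  rw [zMap_apply, blockTail_apply]
  split_ifs with hq
  · set q' : Fin (2*N) := ⟨q.val + 1, hq.1⟩
    have hsplit : ∀ p : Fin (2*N), (if block N p = block N q ∧ q < p then v p else 0) =
        (if q' = p then v p else 0) + if block N p = block N q' ∧ q' < p then v p else 0 := by
      intro p
      by_cases hp : q' = p
      · subst hp
        have hq' : block N q' = block N q ∧ q < q' := by
          simp only [block_eq_block_iff, Fin.lt_def, q']
          omega
        simp [hq']
      · rw [if_neg hp, zero_add]
        have hp' : q.val + 1 ≠ p.val := fun h => hp (Fin.ext h)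
        refine if_congr ?_ rfl rfl
        simp only [block_eq_block_iff, Fin.lt_def, q']
        omega
    simp only [hsplit, Finset.sum_add_distrib, Finset.sum_ite_eq, Finset.mem_univ, if_true,
      PiLp.add_apply, blockTail_apply]
  · refine Finset.sum_eq_zero fun p _ => if_neg ?_
    simp only [block_eq_block_iff, Fin.lt_def]
    omega

theorem one_sub_zMap_mul_one_add_blockTail : (1 - zMap N) * (1 + blockTail N) = 1 := by
  ext1 v
  simp only [Module.End.mul_apply, LinearMap.sub_apply, LinearMap.add_apply, Module.End.one_apply]
  rw [← blockTail_eq_zMap_add]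
  abel

theorem blockTail_mem_of_zMap_mem {U : Submodule ℂ (Vsp N)} (hzU : U.map (zMap N) ≤ U)
    {x : Vsp N} (hx : zMap N x ∈ U) : blockTail N x ∈ U := by
  have hinv : (1 + blockTail N) * (1 - zMap N) = 1 :=
    mul_eq_one_comm.mp one_sub_zMap_mul_one_add_blockTail
  have hx' : blockTail N x = (1 + blockTail N) (zMap N x) := by
    have hinvx := LinearMap.congr_fun hinv x
    simp only [Module.End.mul_apply, LinearMap.sub_apply, LinearMap.add_apply,
      Module.End.one_apply, map_sub] at hinvx ⊢
    linear_combination (norm := abel) hinvx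
  have hU : U.map (1 - zMap N) ≤ U := by
    rintro _ ⟨u, hu, rfl⟩
    exact U.sub_mem hu (hzU ⟨u, hu, rfl⟩)
  rw [hx']
  exact Module.End.map_le_of_mul_eq_one one_sub_zMap_mul_one_add_blockTail hU ⟨_, hx, rfl⟩

theorem inner_Cmap_Cmap (x y : Vsp N) :
    inner ℂ (Cmap N x) (Cmap N y) =
      inner ℂ x y + inner ℂ (blockTail N x) y + inner ℂ x (blockTail N y) := by
  let c : Fin (2*N) → Fin (2*N) → ℂ := fun p q => starRingEnd ℂ (x p) * y q
  have hC : inner ℂ (Cmap N x) (Cmap N y) =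
      ∑ p, ∑ q, if block N p = block N q then c p q else 0 := by
    simp only [PiLp.inner_apply, RCLike.inner_apply', Cmap_apply]
    exact sum_conj_fiberSum_mul_fiberSum _ _ _
  have hdiag : inner ℂ x y = ∑ p, ∑ q, if p = q then c p q else 0 := by
    simp [PiLp.inner_apply, mul_comm, c]
  have hlower : inner ℂ (blockTail N x) y =
      ∑ p, ∑ q, if block N p = block N q ∧ q < p then c p q else 0 := by
    simp only [PiLp.inner_apply, RCLike.inner_apply', blockTail_apply, map_sum, Finset.sum_mul]
    rw [Finset.sum_comm]
    simp only [apply_ite (starRingEnd ℂ), ite_mul, map_zero, zero_mul, c]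
  have hupper : inner ℂ x (blockTail N y) =
      ∑ p, ∑ q, if block N q = block N p ∧ p < q then c p q else 0 := by
    simp only [PiLp.inner_apply, RCLike.inner_apply', blockTail_apply, Finset.mul_sum]
    simp only [mul_ite, mul_zero, c]
  rw [hC, hdiag, hlower, hupper, ← Finset.sum_add_distrib, ← Finset.sum_add_distrib]
  refine Finset.sum_congr rfl fun p _ => ?_
  rw [← Finset.sum_add_distrib, ← Finset.sum_add_distrib]
  refine Finset.sum_congr rfl fun q _ => ?_
  rcases lt_trichotomy p q with h | rfl | h
  · simp [h, h.ne, h.not_gt, eq_comm]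
  · simp
  · simp [h, h.ne', h.not_gt]

theorem single_mem_ker_zMap {p : Fin (2*N)} (hp : p.val = 0 ∨ p.val = N) :
    EuclideanSpace.single p (1 : ℂ) ∈ LinearMap.ker (zMap N) := by
  ext j
  rw [zMap_apply]
  split_ifs with hj
  · rw [PiLp.single_apply, if_neg (by simp only [Fin.ext_iff]; omega)]
    rfl
  · rfl

theorem two_le_finrank_ker_zMap (hN : 1 ≤ N) :
    2 ≤ Module.finrank ℂ (LinearMap.ker (zMap N)) := by
  let p : Fin 2 → Fin (2*N) := ![⟨0, by omega⟩, ⟨N, by omega⟩]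
  have hp : Function.Injective p := by
    intro i j h
    fin_cases i <;> fin_cases j <;> simp_all [p, Fin.ext_iff] <;> omega
  have hli : LinearIndependent ℂ fun i => EuclideanSpace.single (p i) (1 : ℂ) :=
    (EuclideanSpace.orthonormal_single.comp p hp).linearIndependent
  have hle : Submodule.span ℂ (Set.range fun i => EuclideanSpace.single (p i) (1 : ℂ)) ≤
      LinearMap.ker (zMap N) := by
    rw [Submodule.span_le]
    rintro _ ⟨i, rfl⟩
    exact single_mem_ker_zMap (by fin_cases i <;> simp [p])
  calc 2 = Module.finrank ℂ (Submodule.span ℂ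
        (Set.range fun i => EuclideanSpace.single (p i) (1 : ℂ))) := by
        rw [finrank_span_eq_card hli, Fintype.card_fin]
    _ ≤ _ := Submodule.finrank_mono hle

theorem inner_Cmap_Cmap_of_mem {U : Submodule ℂ (Vsp N)} (hzU : U.map (zMap N) ≤ U)
    {x y : Vsp N} (hx : x ∈ U.comap (zMap N) ⊓ Uᗮ) (hy : y ∈ U.comap (zMap N) ⊓ Uᗮ) :
    inner ℂ (Cmap N x) (Cmap N y) = inner ℂ x y := by
  have hTx : inner ℂ (blockTail N x) y = 0 :=
    Submodule.inner_right_of_mem_orthogonal (blockTail_mem_of_zMap_mem hzU hx.1) hy.2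
  have hTy : inner ℂ x (blockTail N y) = 0 :=
    Submodule.inner_left_of_mem_orthogonal (blockTail_mem_of_zMap_mem hzU hy.1) hx.2
  rw [inner_Cmap_Cmap, hTx, hTy, add_zero, add_zero]

/-- For a `z`-stable subspace `U ⊆ im z` of `ℂ^{2N}`, the subspace
`z⁻¹U ∩ U^⊥` is two-dimensional and `C` restricts to a unitary isomorphism
`z⁻¹U ∩ U^⊥ → ℂ²`. -/
theorem statement10 (N : ℕ) (hN : 2 ≤ N) (U : Submodule ℂ (Vsp N))
    (hzU : Submodule.map (zMap N) U ≤ U) (hU : U ≤ LinearMap.range (zMap N)) :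
    Module.finrank ℂ ↥(Submodule.comap (zMap N) U ⊓ Uᗮ) = 2 ∧
    Function.Bijective
      (fun x : ↥(Submodule.comap (zMap N) U ⊓ Uᗮ) => Cmap N (x : Vsp N)) ∧
    ∀ x y : ↥(Submodule.comap (zMap N) U ⊓ Uᗮ),
      (inner ℂ (Cmap N (x : Vsp N)) (Cmap N (y : Vsp N)) : ℂ)
        = inner ℂ (x : Vsp N) (y : Vsp N) := by
  set W := U.comap (zMap N) ⊓ Uᗮ
  have hiso (x y : W) : inner ℂ (Cmap N x) (Cmap N y) = inner ℂ (x : Vsp N) y :=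
    inner_Cmap_Cmap_of_mem hzU x.2 y.2
  have hinj : Function.Injective ((Cmap N).domRestrict W) := by
    refine (injective_iff_map_eq_zero _).2 fun x hx =>
      Subtype.ext ((inner_self_eq_zero (𝕜 := ℂ)).1 ?_)
    rw [← hiso x x]
    simp [show Cmap N x = 0 from hx]
  have hle : Module.finrank ℂ W ≤ 2 := by
    simpa using LinearMap.finrank_le_finrank_of_injective hinj
  have hge : 2 ≤ Module.finrank ℂ W := by
    have hsplit : Module.finrank ℂ U + Module.finrank ℂ W =
        Module.finrank ℂ (U.comap (zMap N)) := by
      rw [← Submodule.finrank_add_inf_finrank_orthogonal (Submodule.map_le_iff_le_comap.1 hzU),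
        inf_comm]
    have hcomap := (zMap N).finrank_comap_eq_finrank_add_finrank_ker hU
    have hker := two_le_finrank_ker_zMap (N := N) (by omega)
    omega
  have hW : Module.finrank ℂ W = 2 := le_antisymm hle hge
  refine ⟨hW, ⟨hinj, ?_⟩, hiso⟩
  exact (LinearMap.injective_iff_surjective_of_finrank_eq_finrank (by simp [hW])).1 hinj

end Spr
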